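/- arXiv:1605.00709 — 11 statements merged into one kernel-verified Lean document; each statement's English description precedes it below -/
import Mathlib

section
/- Let A be an irreducible nonnegative real square matrix with spectral radius ρ. If -ρ is an eigenvalue of A, then A is bipartite, i.e., there is a partition of the index set into two parts such that both diagonal blocks of A are zero. -/
/-!
Let `x` be a real eigenvector of `A` for `-ρ`. By the triangle inequality `ρ|x| ≤ A|x|`, and a
nonnegative subinvariant vector of an irreducible matrix with spectral radius at most `ρ` is
invariant and strictly positive: otherwise a suitable positive matrix `B` commuting with `A`
produces `z = B|x| > 0` with `A z ≥ (ρ + ε) z`, and Gelfand's formula forces the spectral radius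
to be at least `ρ + ε`. Hence `A|x| = ρ|x|`, `|x| > 0`, and `A (|x| + x) = ρ (|x| - x)` vanishes
at every index with `x i > 0`; since the entries of `A` are nonnegative, `A i j = 0` whenever
`x i, x j > 0`. The same argument for `-x` gives the other block, so `U = {i | 0 < x i}`.
-/

open Matrix Filter Topology

-- The spectral radius does not depend on the norm; Gelfand's formula needs some Banach norm.
attribute [local instance] Matrix.linftyOpNormedAddCommGroup Matrix.linftyOpNormedRing
  Matrix.linftyOpNormedAlgebra

lemma exists_pos_forall_mul_lt {ι : Type*} [Finite ι] (u : ι → ℝ) {v : ι → ℝ}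
    (hv : ∀ i, 0 < v i) : ∃ ε > 0, ∀ i, ε * u i < v i := by
  have h : ∀ᶠ ε in 𝓝[>] (0 : ℝ), ∀ i, ε * u i < v i := by
    refine eventually_all.2 fun i => ?_
    have : Tendsto (fun ε : ℝ => ε * u i) (𝓝[>] 0) (𝓝 0) :=
      ((continuous_mul_const (u i)).tendsto' 0 0 (zero_mul _)).mono_left nhdsWithin_le_nhds
    exact this.eventually_lt_const (hv i)
  obtain ⟨ε, hε, hεpos⟩ := (h.and self_mem_nhdsWithin).exists
  exact ⟨ε, hεpos, hε⟩

lemma pi_norm_le_pi_norm_of_nonneg_of_le {ι : Type*} [Fintype ι] {u v : ι → ℝ} (hu : 0 ≤ u)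
    (huv : u ≤ v) : ‖u‖ ≤ ‖v‖ :=
  (pi_norm_le_iff_of_nonneg (norm_nonneg v)).2 fun i =>
    (Real.norm_of_nonneg (hu i)).trans_le <|
      (huv i).trans <| (le_abs_self _).trans (norm_le_pi_norm v i)

theorem le_spectralRadius_of_pow_le_norm_pow {A : Type*} [NormedRing A] [NormedAlgebra ℂ A]
    [CompleteSpace A] (a : A) {r : ℝ} (hr : 0 ≤ r) (h : ∀ k : ℕ, r ^ k ≤ ‖a ^ k‖) :
    ENNReal.ofReal r ≤ spectralRadius ℂ a := by
  refine ge_of_tendsto (spectrum.pow_norm_pow_one_div_tendsto_nhds_spectralRadius a) ?_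
  filter_upwards [eventually_ne_atTop 0] with k hk
  refine ENNReal.ofReal_le_ofReal ?_
  calc r = (r ^ k) ^ (1 / k : ℝ) := by rw [one_div, Real.pow_rpow_inv_natCast hr hk]
    _ ≤ ‖a ^ k‖ ^ (1 / k : ℝ) := by gcongr; exact h k

namespace Matrix

variable {ι : Type*} [Fintype ι]

lemma linfty_opNorm_map_ofReal {κ : Type*} [Fintype κ] (M : Matrix ι κ ℝ) :
    ‖M.map ((↑) : ℝ → ℂ)‖ = ‖M‖ := by
  simp [linfty_opNorm_def]

lemma pow_mulVec_eq_pow_smul [DecidableEq ι] {R : Type*} [CommSemiring R] {A : Matrix ι ι R}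
    {v : ι → R} {c : R} (h : A *ᵥ v = c • v) (k : ℕ) : A ^ k *ᵥ v = c ^ k • v := by
  induction k with
  | zero => simp
  | succ k ih => rw [pow_succ', ← mulVec_mulVec, ih, mulVec_smul, h, smul_smul, pow_succ]

lemma mulVec_mono {A : Matrix ι ι ℝ} (hA : ∀ i j, 0 ≤ A i j) {u v : ι → ℝ} (huv : u ≤ v) :
    A *ᵥ u ≤ A *ᵥ v :=
  fun i => dotProduct_le_dotProduct_of_nonneg_left huv (hA i)

lemma abs_mulVec_le_mulVec_abs {A : Matrix ι ι ℝ} (hA : ∀ i j, 0 ≤ A i j) (x : ι → ℝ) :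
    |A *ᵥ x| ≤ A *ᵥ |x| := fun i =>
  (Finset.abs_sum_le_sum_abs _ _).trans_eq <| by
    simp [abs_mul, abs_of_nonneg (hA i _), mulVec, dotProduct]

lemma mulVec_apply_pos {A : Matrix ι ι ℝ} (hA : ∀ i j, 0 < A i j) {v : ι → ℝ} (hv : 0 ≤ v)
    (hv0 : v ≠ 0) (i : ι) : 0 < (A *ᵥ v) i := by
  obtain ⟨j, hj⟩ := Function.ne_iff.1 hv0
  exact Finset.sum_pos' (fun l _ => mul_nonneg (hA i l).le (hv l))
    ⟨j, Finset.mem_univ j, mul_pos (hA i j) ((hv j).lt_of_ne' hj)⟩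

lemma apply_eq_zero_of_mulVec_apply_eq_zero {A : Matrix ι ι ℝ} (hA : ∀ i j, 0 ≤ A i j)
    {u : ι → ℝ} (hu : 0 ≤ u) {i j : ι} (h : (A *ᵥ u) i = 0) (hj : 0 < u j) : A i j = 0 := by
  have := (Finset.sum_eq_zero_iff_of_nonneg fun l _ => mul_nonneg (hA i l) (hu l)).1 h j
    (Finset.mem_univ j)
  exact (mul_eq_zero.1 this).resolve_right hj.ne'

theorem le_spectralRadius_of_smul_le_mulVec [DecidableEq ι] {A : Matrix ι ι ℝ}
    (hA : ∀ i j, 0 ≤ A i j) {z : ι → ℝ} (hz : 0 ≤ z) (hz0 : z ≠ 0) {r : ℝ} (hr : 0 ≤ r)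
    (h : r • z ≤ A *ᵥ z) : ENNReal.ofReal r ≤ spectralRadius ℂ (A.map ((↑) : ℝ → ℂ)) := by
  have hpow (k : ℕ) : r ^ k • z ≤ A ^ k *ᵥ z := by
    induction k with
    | zero => simp
    | succ k ih =>
      calc r ^ (k + 1) • z = r ^ k • (r • z) := by rw [pow_succ, mul_smul]
        _ ≤ r ^ k • (A *ᵥ z) := smul_le_smul_of_nonneg_left h (by positivity)
        _ = A *ᵥ (r ^ k • z) := (mulVec_smul _ _ _).symm
        _ ≤ A *ᵥ (A ^ k *ᵥ z) := mulVec_mono hA ih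
        _ = A ^ (k + 1) *ᵥ z := by rw [mulVec_mulVec, ← pow_succ']
  refine le_spectralRadius_of_pow_le_norm_pow _ hr fun k => ?_
  rw [show A.map ((↑) : ℝ → ℂ) ^ k = (A ^ k).map (↑) from (A.map_pow Complex.ofRealHom k).symm,
    linfty_opNorm_map_ofReal]
  refine le_of_mul_le_mul_right ?_ (norm_pos_iff.2 hz0)
  calc r ^ k * ‖z‖ = ‖r ^ k • z‖ := by rw [norm_smul, Real.norm_of_nonneg (by positivity)]
    _ ≤ ‖A ^ k *ᵥ z‖ :=
        pi_norm_le_pi_norm_of_nonneg_of_le (smul_nonneg (by positivity) hz) (hpow k)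
    _ ≤ ‖A ^ k‖ * ‖z‖ := linfty_opNorm_mulVec _ _

theorem spectralRadius_le_of_forall_mem_roots_charpoly [DecidableEq ι] (M : Matrix ι ι ℂ)
    {r : ℝ} (h : ∀ μ ∈ M.charpoly.roots, ‖μ‖ ≤ r) : spectralRadius ℂ M ≤ ENNReal.ofReal r := by
  refine iSup₂_le fun μ hμ => ?_
  rw [mem_spectrum_iff_isRoot_charpoly, ← Polynomial.mem_roots M.charpoly_monic.ne_zero] at hμ
  rw [← ENNReal.ofReal_coe_nnreal, coe_nnnorm]
  exact ENNReal.ofReal_le_ofReal (h μ hμ)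

theorem exists_mulVec_eq_smul_of_mem_roots_charpoly_map [DecidableEq ι] (A : Matrix ι ι ℝ)
    {r : ℝ} (h : (r : ℂ) ∈ (A.map ((↑) : ℝ → ℂ)).charpoly.roots) : ∃ x ≠ 0, A *ᵥ x = r • x := by
  have hr : A.charpoly.IsRoot r := by
    rw [show A.map ((↑) : ℝ → ℂ) = A.map (algebraMap ℝ ℂ) from rfl, charpoly_map,
      Polynomial.mem_roots_map_of_injective (algebraMap ℝ ℂ).injective
        A.charpoly_monic.ne_zero] at h
    rwa [← Complex.coe_algebraMap, Polynomial.eval₂_at_apply, map_eq_zero] at h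
  have hspec : r ∈ spectrum ℝ (toLin' A) := by
    rwa [spectrum_toLin', mem_spectrum_iff_isRoot_charpoly]
  obtain ⟨x, hx⟩ := (Module.End.hasEigenvalue_iff_mem_spectrum.2 hspec).exists_hasEigenvector
  exact ⟨x, hx.2, hx.apply_eq_smul⟩

section Irreducible

variable [DecidableEq ι] {A : Matrix ι ι ℝ}

lemma IsIrreducible.exists_commute_pos (hA : A.IsIrreducible) :
    ∃ B : Matrix ι ι ℝ, Commute A B ∧ ∀ i j, 0 < B i j := by
  choose k _ hk using (isIrreducible_iff_exists_pow_pos hA.nonneg).1 hA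
  refine ⟨∑ p : ι × ι, A ^ k p.1 p.2,
    Commute.sum_right _ _ _ fun p _ => Commute.self_pow A _, fun i j => ?_⟩
  rw [Matrix.sum_apply]
  exact Finset.sum_pos' (fun p _ => pow_apply_nonneg hA.nonneg _ i j)
    ⟨(i, j), Finset.mem_univ _, hk i j⟩

theorem IsIrreducible.pos_of_mulVec_eq_smul (hA : A.IsIrreducible) {y : ι → ℝ} (hy : 0 ≤ y)
    (hy0 : y ≠ 0) {ρ : ℝ} (h : A *ᵥ y = ρ • y) (i : ι) : 0 < y i := by
  obtain ⟨j, hj⟩ := Function.ne_iff.1 hy0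
  obtain ⟨k, -, hk⟩ := (isIrreducible_iff_exists_pow_pos hA.nonneg).1 hA i j
  have hpos : 0 < ρ ^ k * y i := by
    have := congrFun (pow_mulVec_eq_pow_smul h k) i
    rw [Pi.smul_apply, smul_eq_mul] at this
    rw [← this]
    exact Finset.sum_pos' (fun l _ => mul_nonneg (pow_apply_nonneg hA.nonneg k i l) (hy l))
      ⟨j, Finset.mem_univ j, mul_pos hk ((hy j).lt_of_ne' hj)⟩
  exact (hy i).lt_of_ne fun h0 => by simp [← h0] at hpos

theorem IsIrreducible.mulVec_eq_smul_of_smul_le_mulVec (hA : A.IsIrreducible) {ρ : ℝ}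
    (hρ : 0 ≤ ρ) (hsr : spectralRadius ℂ (A.map ((↑) : ℝ → ℂ)) ≤ ENNReal.ofReal ρ)
    {y : ι → ℝ} (hy : 0 ≤ y) (hy0 : y ≠ 0) (h : ρ • y ≤ A *ᵥ y) : A *ᵥ y = ρ • y := by
  by_contra hne
  obtain ⟨B, hAB, hB⟩ := hA.exists_commute_pos
  set w := A *ᵥ y - ρ • y with hw_def
  have hw : 0 ≤ w := sub_nonneg.2 h
  have hw0 : w ≠ 0 := sub_ne_zero.2 hne
  have hz := mulVec_apply_pos hB hy hy0
  obtain ⟨ε, hε, hεz⟩ := exists_pos_forall_mul_lt (B *ᵥ y) (mulVec_apply_pos hB hw hw0)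
  have hAz : A *ᵥ (B *ᵥ y) = ρ • (B *ᵥ y) + B *ᵥ w := by
    rw [mulVec_mulVec, hAB.eq, ← mulVec_mulVec, ← mulVec_smul, ← mulVec_add, hw_def,
      add_sub_cancel]
  have hsub : (ρ + ε) • (B *ᵥ y) ≤ A *ᵥ (B *ᵥ y) := fun i => by
    rw [hAz]
    simp only [Pi.smul_apply, Pi.add_apply, smul_eq_mul, add_mul]
    linarith [hεz i]
  obtain ⟨i, -⟩ := Function.ne_iff.1 hy0
  have hz0 : B *ᵥ y ≠ 0 := fun h0 => (hz i).ne' (congrFun h0 i)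
  have := (le_spectralRadius_of_smul_le_mulVec hA.nonneg (fun i => (hz i).le) hz0
    (by positivity) hsub).trans hsr
  rw [ENNReal.ofReal_le_ofReal_iff hρ] at this
  linarith

end Irreducible

lemma apply_eq_zero_of_mulVec_eq_neg_smul {A : Matrix ι ι ℝ} (hA : ∀ i j, 0 ≤ A i j)
    {x : ι → ℝ} {ρ : ℝ} (hx : A *ᵥ x = -ρ • x) (habs : A *ᵥ |x| = ρ • |x|) {i j : ι}
    (hi : 0 < x i) (hj : 0 < x j) : A i j = 0 := by
  have hsum : A *ᵥ (|x| + x) = ρ • (|x| - x) := by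
    rw [mulVec_add, habs, hx, smul_sub, neg_smul, sub_eq_add_neg]
  have hnonneg : 0 ≤ |x| + x := fun l => neg_le_iff_add_nonneg'.1 (neg_abs_le (x l))
  refine apply_eq_zero_of_mulVec_apply_eq_zero hA hnonneg ?_ (by simp [abs_of_pos hj, hj])
  simp [hsum, abs_of_pos hi]

end Matrix

theorem irreducible_nonneg_negSpectralRadius_bipartite_general (n : ℕ)
    (A : Matrix (Fin n) (Fin n) ℝ)
    (hnn : ∀ i j, 0 ≤ A i j)
    (hirr : ∀ i j : Fin n, ∃ m : ℕ, 0 < m ∧ 0 < (A ^ m) i j)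
    (ρ : ℝ)
    (hρ : IsGreatest
      {t : ℝ | ∃ μ ∈ (A.map (fun a => (a : ℂ))).charpoly.roots, ‖μ‖ = t} ρ)
    (hneg : (-ρ : ℂ) ∈ (A.map (fun a => (a : ℂ))).charpoly.roots) :
    ∃ U : Finset (Fin n),
      (∀ i ∈ U, ∀ j ∈ U, A i j = 0) ∧ (∀ i ∉ U, ∀ j ∉ U, A i j = 0) := by
  have hA : A.IsIrreducible := (isIrreducible_iff_exists_pow_pos hnn).2 hirr
  have hρ0 : 0 ≤ ρ := by
    obtain ⟨μ, -, rfl⟩ := hρ.1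
    exact norm_nonneg μ
  have hsr := spectralRadius_le_of_forall_mem_roots_charpoly _ fun μ hμ => hρ.2 ⟨μ, hμ, rfl⟩
  obtain ⟨x, hx0, hx⟩ := exists_mulVec_eq_smul_of_mem_roots_charpoly_map A (r := -ρ)
    (by exact_mod_cast hneg)
  have habs0 : |x| ≠ 0 := fun h => hx0 (funext fun i => abs_eq_zero.1 (congrFun h i))
  have habs : A *ᵥ |x| = ρ • |x| := by
    refine hA.mulVec_eq_smul_of_smul_le_mulVec hρ0 hsr (abs_nonneg x) habs0 ?_
    calc ρ • |x| = |A *ᵥ x| := funext fun i => by simp [hx, abs_mul, abs_of_nonneg hρ0]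
      _ ≤ A *ᵥ |x| := abs_mulVec_le_mulVec_abs hnn x
  have hx_ne (i : Fin n) : x i ≠ 0 :=
    abs_pos.1 (hA.pos_of_mulVec_eq_smul (abs_nonneg x) habs0 habs i)
  have hx_neg : A *ᵥ (-x) = -ρ • -x := by rw [mulVec_neg, hx, smul_neg]
  refine ⟨({i | 0 < x i} : Finset (Fin n)), fun i hi j hj => ?_, fun i hi j hj => ?_⟩
  · simp only [Finset.mem_filter, Finset.mem_univ, true_and] at hi hj
    exact apply_eq_zero_of_mulVec_eq_neg_smul hnn hx habs hi hj
  · simp only [Finset.mem_filter, Finset.mem_univ, true_and, not_lt] at hi hj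
    exact apply_eq_zero_of_mulVec_eq_neg_smul hnn hx_neg (by rwa [abs_neg])
      (neg_pos.2 (hi.lt_of_ne (hx_ne i))) (neg_pos.2 (hj.lt_of_ne (hx_ne j)))

/-- Let `A` be an irreducible nonnegative real square matrix with spectral radius `ρ`
(the largest modulus among its complex eigenvalues).  If `-ρ` is an eigenvalue of `A`,
then `A` is bipartite. -/
theorem irreducible_nonneg_negSpectralRadius_bipartite (n : ℕ) (hn : 0 < n)
    (A : Matrix (Fin n) (Fin n) ℝ)
    (hnn : ∀ i j, 0 ≤ A i j)
    (hirr : ∀ i j : Fin n, ∃ m : ℕ, 0 < m ∧ 0 < (A ^ m) i j)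
    (ρ : ℝ)
    (hρ : IsGreatest
      {t : ℝ | ∃ μ ∈ (A.map (fun a => (a : ℂ))).charpoly.roots, ‖μ‖ = t} ρ)
    (hneg : (-ρ : ℂ) ∈ (A.map (fun a => (a : ℂ))).charpoly.roots) :
    ∃ U : Finset (Fin n),
      (∀ i ∈ U, ∀ j ∈ U, A i j = 0) ∧ (∀ i ∉ U, ∀ j ∉ U, A i j = 0) :=
  irreducible_nonneg_negSpectralRadius_bipartite_general n A hnn hirr ρ hρ hneg
end

section
/- If A is a symmetric nonnegative real 2-matrix whose spectrum is symmetric (the spectrum of A equals the spectrum of -A as multisets), then A is bipartite. -/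
/-!
For a Hermitian matrix, `trace (A ^ k)` is the `k`-th power sum of the roots of its characteristic
polynomial, so a spectrum symmetric under `λ ↦ -λ` forces `trace (A ^ k) = 0` for odd `k`. When
`A ≥ 0` entrywise, so is `A ^ k`, hence every diagonal entry of an odd power vanishes. A closed
walk of length `k` in the support graph of `A` would make `(A ^ k) i i` positive, so this graph
has no odd closed walks, is 2-colourable, and a colour class is the required part `U`.
-/

namespace Matrix

section Spectrum

variable {𝕜 n : Type*} [RCLike 𝕜] [Fintype n] [DecidableEq n] {A : Matrix n n 𝕜}

lemma IsHermitian.trace_pow_eq_sum_roots_charpoly_pow (hA : A.IsHermitian) (k : ℕ) :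
    (A ^ k).trace = (A.charpoly.roots.map (· ^ k)).sum := by
  conv_lhs => rw [hA.spectral_theorem, ← map_pow, Unitary.conjStarAlgAut_apply, trace_mul_cycle,
    Unitary.coe_star_mul_self, one_mul, diagonal_pow, trace_diagonal]
  simp [hA.roots_charpoly_eq_eigenvalues]

lemma IsHermitian.trace_pow_eq_zero_of_roots_charpoly_neg (hA : A.IsHermitian)
    (hspec : A.charpoly.roots = (-A).charpoly.roots) {k : ℕ} (hk : Odd k) :
    (A ^ k).trace = 0 := by
  have h := hA.neg.trace_pow_eq_sum_roots_charpoly_pow k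
  rw [← hspec, ← hA.trace_pow_eq_sum_roots_charpoly_pow, hk.neg_pow, trace_neg] at h
  exact CharZero.neg_eq_self_iff.mp h

end Spectrum

section Nonneg

variable {R n : Type*} [Fintype n] {A : Matrix n n R}

lemma diag_pow_eq_zero_of_trace_eq_zero [DecidableEq n] [Semiring R] [PartialOrder R]
    [IsOrderedRing R] (hA : ∀ i j, 0 ≤ A i j) {k : ℕ} (h : (A ^ k).trace = 0) (i : n) :
    (A ^ k) i i = 0 :=
  (Finset.sum_eq_zero_iff_of_nonneg fun j _ ↦ pow_apply_nonneg hA k j j).mp h i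
    (Finset.mem_univ i)

lemma pow_length_apply_pos_of_walk [DecidableEq n] [Semiring R] [PartialOrder R]
    [IsStrictOrderedRing R] (hA : ∀ i j, 0 ≤ A i j) {G : SimpleGraph n}
    (hG : ∀ i j, G.Adj i j → 0 < A i j)
    {i j : n} (w : G.Walk i j) : 0 < (A ^ w.length) i j := by
  induction w with
  | nil => simp
  | @cons u v w huv p ih =>
    rw [SimpleGraph.Walk.length_cons, pow_succ', mul_apply]
    exact Finset.sum_pos' (fun x _ ↦ mul_nonneg (hA u x) (pow_apply_nonneg hA _ x w))
      ⟨v, Finset.mem_univ v, mul_pos (hG u v huv) ih⟩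

abbrev supportGraph [Zero R] (A : Matrix n n R) : SimpleGraph n :=
  SimpleGraph.fromRel fun i j ↦ A i j ≠ 0

lemma supportGraph_colorable_two [DecidableEq n] [Semiring R] [PartialOrder R]
    [IsStrictOrderedRing R] (hsym : A.IsSymm) (hA : ∀ i j, 0 ≤ A i j)
    (htr : ∀ k, Odd k → (A ^ k).trace = 0) :
    A.supportGraph.Colorable 2 := by
  refine SimpleGraph.two_colorable_iff_forall_loop_even.mpr fun u w ↦ Nat.not_odd_iff_even.mp
    fun hodd ↦ ?_
  have hadj : ∀ i j, A.supportGraph.Adj i j → 0 < A i j := by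
    rintro i j ⟨-, hij | hji⟩
    · exact (hA i j).lt_of_ne' hij
    · rw [hsym.apply i j] at hji
      exact (hA i j).lt_of_ne' hji
  exact (pow_length_apply_pos_of_walk hA hadj w).ne'
    (diag_pow_eq_zero_of_trace_eq_zero hA (htr _ hodd) u)

lemma exists_bipartition_of_supportGraph_colorable_two [Zero R] (hdiag : ∀ i, A i i = 0)
    (hcol : A.supportGraph.Colorable 2) :
    ∃ U : Finset n, (∀ i ∈ U, ∀ j ∈ U, A i j = 0) ∧ ∀ i ∉ U, ∀ j ∉ U, A i j = 0 := by
  obtain ⟨c⟩ := hcol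
  have hsame : ∀ i j, c i = c j → A i j = 0 := by
    intro i j hc
    by_contra hij
    rcases eq_or_ne i j with rfl | hne
    · exact hij (hdiag i)
    · exact c.valid ((SimpleGraph.fromRel_adj _ i j).mpr ⟨hne, Or.inl hij⟩) hc
  refine ⟨Finset.univ.filter (c · = 0), fun i hi j hj ↦ hsame i j ?_,
    fun i hi j hj ↦ hsame i j ?_⟩
  · simp only [Finset.mem_filter, Finset.mem_univ, true_and] at hi hj
    rw [hi, hj]
  · simp only [Finset.mem_filter, Finset.mem_univ, true_and] at hi hj
    omega

end Nonneg

end Matrix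

open Matrix

/-- If `A` is a symmetric nonnegative real matrix whose spectrum (multiset of complex
eigenvalues, i.e. roots of the characteristic polynomial) is symmetric, then `A` is
bipartite. -/
theorem symm_nonneg_symmetric_spectrum_bipartite (n : ℕ) (A : Matrix (Fin n) (Fin n) ℝ)
    (hsym : A.IsSymm)
    (hnn : ∀ i j, 0 ≤ A i j)
    (hspec : (A.map (fun a => (a : ℂ))).charpoly.roots
      = ((-A).map (fun a => (a : ℂ))).charpoly.roots) :
    ∃ U : Finset (Fin n),
      (∀ i ∈ U, ∀ j ∈ U, A i j = 0) ∧ (∀ i ∉ U, ∀ j ∉ U, A i j = 0) := by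
  set B : Matrix (Fin n) (Fin n) ℂ := A.map (↑)
  have hB : B.IsHermitian := by
    ext i j
    simp [B, hsym.apply i j]
  have htr : ∀ k, Odd k → (A ^ k).trace = 0 := by
    intro k hk
    have h := hB.trace_pow_eq_zero_of_roots_charpoly_neg
      (by rwa [← Matrix.map_neg _ Complex.ofReal_neg]) hk
    rw [show B = A.map Complex.ofRealHom from rfl, ← Matrix.map_pow,
      ← AddMonoidHom.map_trace] at h
    exact Complex.ofReal_eq_zero.mp h
  have hdiag : ∀ i, A i i = 0 := by
    simpa using diag_pow_eq_zero_of_trace_eq_zero hnn (htr 1 odd_one)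
  exact exists_bipartition_of_supportGraph_colorable_two hdiag
    (supportGraph_colorable_two hsym hnn htr)
end

section
/- Let r ≥ 2 be even and let A be a cubical r-matrix of order n over the complex numbers. If A has an odd transversal, then A is odd-colorable. -/
open Finset

/-- If `r ≥ 2` is even and a cubical complex `r`-matrix `A` of order `n` has an odd
transversal `X` (every nonzero entry has an odd number of its indices in `X`), then
`A` is odd-colorable: there is `φ : [n] → ℤ/rℤ` whose values sum to `r/2 (mod r)` on
the indices of every nonzero entry. -/
theorem oddTransversal_implies_oddColorable (r n : ℕ) (hr : 2 ≤ r) (hre : Even r)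
    (A : (Fin r → Fin n) → ℂ) (X : Finset (Fin n))
    (hX : ∀ i : Fin r → Fin n, A i ≠ 0 →
      Odd (Finset.univ.filter (fun j : Fin r => i j ∈ X)).card) :
    ∃ φ : Fin n → ZMod r, ∀ i : Fin r → Fin n, A i ≠ 0 →
      ∑ j : Fin r, φ (i j) = ((r / 2 : ℕ) : ZMod r) := by
  refine ⟨fun v => if v ∈ X then ((r / 2 : ℕ) : ZMod r) else 0, fun i hi => ?_⟩
  obtain ⟨m, hm⟩ := hX i hi
  have hsum : ∑ j : Fin r, (if i j ∈ X then ((r / 2 : ℕ) : ZMod r) else 0)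
      = (Finset.univ.filter (fun j : Fin r => i j ∈ X)).card • ((r / 2 : ℕ) : ZMod r) := by
    rw [← Finset.sum_filter, Finset.sum_const]
  rw [hsum, hm]
  have h2 : 2 * (r / 2) = r := Nat.two_mul_div_two_of_even hre
  have : (2 * m + 1) • ((r / 2 : ℕ) : ZMod r) = (((2 * m + 1) * (r / 2) : ℕ) : ZMod r) := by
    push_cast; ring
  rw [this]
  have : (2 * m + 1) * (r / 2) = m * r + r / 2 := by
    rw [add_mul, one_mul, mul_comm 2 m, mul_assoc, h2]
  rw [this]
  push_cast
  simp [ZMod.natCast_self]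
end

section
/- Let r ≡ 2 (mod 4). A cubical r-matrix A is odd-colorable if and only if A has an odd transversal. -/
open Finset

/-- For `r ≡ 2 (mod 4)`, a cubical complex `r`-matrix is odd-colorable if and only if
it has an odd transversal. -/
theorem oddColorable_iff_oddTransversal_of_mod_four (r n : ℕ) (hr : r % 4 = 2)
    (A : (Fin r → Fin n) → ℂ) :
    (∃ φ : Fin n → ZMod r, ∀ i : Fin r → Fin n, A i ≠ 0 →
        ∑ j : Fin r, φ (i j) = ((r / 2 : ℕ) : ZMod r)) ↔
      (∃ X : Finset (Fin n), ∀ i : Fin r → Fin n, A i ≠ 0 →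
        Odd (Finset.univ.filter (fun j : Fin r => i j ∈ X)).card) := by
  have h2 : (2 : ℕ) ∣ r := by omega
  obtain ⟨k, hk⟩ : ∃ k, r = 4 * k + 2 := ⟨r / 4, by omega⟩
  have hhalf : r / 2 = 2 * k + 1 := by omega
  set f : ZMod r →+* ZMod 2 := ZMod.castHom h2 (ZMod 2) with hf
  constructor
  · rintro ⟨φ, hφ⟩
    refine ⟨univ.filter (fun v => f (φ v) = 1), ?_⟩
    intro i hi
    have h1 := congrArg f (hφ i hi)
    rw [map_sum, map_natCast] at h1
    have hrm : ((r / 2 : ℕ) : ZMod 2) = 1 := by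
      have hm : (r / 2) % 2 = 1 := by omega
      rw [← ZMod.natCast_mod, hm, Nat.cast_one]
    have hsum : ∑ j : Fin r, f (φ (i j)) =
        ((univ.filter (fun j : Fin r => f (φ (i j)) = 1)).card : ZMod 2) := by
      rw [Finset.card_filter]
      push_cast
      refine Finset.sum_congr rfl ?_
      intro j _
      by_cases h : f (φ (i j)) = 1
      · simp [h]
      · have : f (φ (i j)) = 0 := by
          revert h; generalize f (φ (i j)) = x; revert x; decide
        simp [h, this]
    rw [hsum, hrm] at h1
    have hmem : (univ.filter (fun j : Fin r => i j ∈ univ.filter (fun v => f (φ v) = 1)))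
        = univ.filter (fun j : Fin r => f (φ (i j)) = 1) := by
      apply Finset.filter_congr; intro j _; simp
    rw [hmem]
    rw [Nat.odd_iff]
    set c := (univ.filter (fun j : Fin r => f (φ (i j)) = 1)).card
    by_contra h
    have : c % 2 = 0 := by omega
    have h2c : (2 : ℕ) ∣ c := by omega
    rw [(ZMod.natCast_eq_zero_iff c 2).2 h2c] at h1
    exact one_ne_zero h1.symm
  · rintro ⟨X, hX⟩
    refine ⟨fun v => if v ∈ X then ((r / 2 : ℕ) : ZMod r) else 0, ?_⟩
    intro i hi
    obtain ⟨t, ht⟩ := hX i hi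
    have : ∑ j : Fin r, (if i j ∈ X then ((r / 2 : ℕ) : ZMod r) else 0)
        = (univ.filter (fun j : Fin r => i j ∈ X)).card • ((r / 2 : ℕ) : ZMod r) := by
      rw [← Finset.sum_filter, Finset.sum_const]
    rw [this, ht]
    have harith : (2 * t + 1) * (r / 2) = r / 2 + t * r := by
      rw [hhalf, hk]; ring
    rw [nsmul_eq_mul]
    rw [show ((2 * t + 1 : ℕ) : ZMod r) * ((r / 2 : ℕ) : ZMod r)
        = (((2 * t + 1) * (r / 2) : ℕ) : ZMod r) by push_cast; ring]
    rw [harith]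
    push_cast [ZMod.natCast_self]
    ring
end

section
/- Let k be a positive integer and n ≥ 8k. Partition [n] into sets A and B with |A| ≥ 4k and |B| ≥ 4k, and let G be the 4k-uniform hypergraph on [n] whose edges are all 4k-subsets e with |e ∩ A| = 2k and |e ∩ B| = 2k. Then G is odd-colorable but has no odd transversal. -/
open Finset

/-- Let `k ≥ 1`, `n ≥ 8k`, and partition `[n]` into `A`, `B` with `|A| ≥ 4k`, `|B| ≥ 4k`.
The `4k`-uniform hypergraph whose edges are the `4k`-sets meeting `A` and `B` in exactly
`2k` vertices each is odd-colorable but has no odd transversal. -/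
theorem oddColorable_no_oddTransversal_construction (k n : ℕ) (hk : 0 < k)
    (hn : 8 * k ≤ n) (A B : Finset (Fin n))
    (hUnion : A ∪ B = Finset.univ) (hDisj : Disjoint A B)
    (hA : 4 * k ≤ A.card) (hB : 4 * k ≤ B.card)
    (isEdge : Finset (Fin n) → Prop)
    (hEdge : ∀ e, isEdge e ↔
      e.card = 4 * k ∧ (e ∩ A).card = 2 * k ∧ (e ∩ B).card = 2 * k) :
    (∃ φ : Fin n → ZMod (4 * k), ∀ e, isEdge e →
        ∑ v ∈ e, φ v = ((2 * k : ℕ) : ZMod (4 * k))) ∧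
      ¬ ∃ X : Finset (Fin n), ∀ e, isEdge e → Odd (e ∩ X).card := by
  constructor
  · refine ⟨fun v => if v ∈ A then 1 else 0, fun e he => ?_⟩
    obtain ⟨-, h2, -⟩ := (hEdge e).mp he
    calc ∑ v ∈ e, (if v ∈ A then (1 : ZMod (4 * k)) else 0)
        = ∑ v ∈ e ∩ A, (1 : ZMod (4 * k)) := by
          rw [Finset.sum_ite_mem]
      _ = ((e ∩ A).card : ZMod (4 * k)) := by
          simp
      _ = ((2 * k : ℕ) : ZMod (4 * k)) := by rw [h2]
  · rintro ⟨X, hX⟩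
    -- generic edge construction
    have edge_mk : ∀ S T : Finset (Fin n), S ⊆ A → T ⊆ B →
        S.card = 2 * k → T.card = 2 * k → isEdge (S ∪ T) := by
      intro S T hS hT hSc hTc
      have hST : Disjoint S T := hDisj.mono hS hT
      have hTA : T ∩ A = ∅ := by
        rw [← Finset.disjoint_iff_inter_eq_empty]
        exact hDisj.symm.mono hT le_rfl
      have hSB : S ∩ B = ∅ := by
        rw [← Finset.disjoint_iff_inter_eq_empty]
        exact hDisj.mono hS le_rfl
      rw [hEdge]
      refine ⟨?_, ?_, ?_⟩
      · rw [Finset.card_union_of_disjoint hST, hSc, hTc]; ring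
      · rw [Finset.union_inter_distrib_right, Finset.inter_eq_left.mpr hS, hTA,
          Finset.union_empty, hSc]
      · rw [Finset.union_inter_distrib_right, Finset.inter_eq_left.mpr hT, hSB,
          Finset.empty_union, hTc]
    -- generic homogeneity lemma
    have hom : ∀ C D : Finset (Fin n), Disjoint C D →
        (∀ S T : Finset (Fin n), S ⊆ C → T ⊆ D →
          S.card = 2 * k → T.card = 2 * k → isEdge (S ∪ T)) →
        4 * k ≤ C.card → 4 * k ≤ D.card →
        ∀ u ∈ C, ∀ v ∈ C, u ∈ X → v ∈ X := by
      intro C D hCD edgeCD hC hD u hu v hv huX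
      by_contra hvX
      have huv : u ≠ v := fun h => hvX (h ▸ huX)
      obtain ⟨T, hTD, hTc⟩ := Finset.exists_subset_card_eq (show 2 * k ≤ D.card by omega)
      have hcard2 : ({u, v} : Finset (Fin n)).card ≤ 2 := Finset.card_le_two
      have hle := Finset.le_card_sdiff ({u, v} : Finset (Fin n)) C
      obtain ⟨S, hSsub, hSc⟩ := Finset.exists_subset_card_eq
        (show 2 * k - 1 ≤ (C \ {u, v}).card by omega)
      have hSC : S ⊆ C := hSsub.trans (Finset.sdiff_subset)
      have huS : u ∉ S := by
        intro h
        have := hSsub h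
        rw [Finset.mem_sdiff] at this
        exact this.2 (by simp)
      have hvS : v ∉ S := by
        intro h
        have := hSsub h
        rw [Finset.mem_sdiff] at this
        exact this.2 (by simp)
      have heu : isEdge (insert u S ∪ T) :=
        edgeCD _ _ (Finset.insert_subset hu hSC) hTD
          (by rw [Finset.card_insert_of_notMem huS]; omega) hTc
      have hev : isEdge (insert v S ∪ T) :=
        edgeCD _ _ (Finset.insert_subset hv hSC) hTD
          (by rw [Finset.card_insert_of_notMem hvS]; omega) hTc
      have oddu := hX _ heu
      have oddv := hX _ hev
      have hdisj : ∀ W : Finset (Fin n), W ⊆ C →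
          ((W ∪ T) ∩ X).card = (W ∩ X).card + (T ∩ X).card := by
        intro W hW
        rw [Finset.union_inter_distrib_right, Finset.card_union_of_disjoint]
        exact (hCD.mono hW hTD).mono Finset.inter_subset_left Finset.inter_subset_left
      rw [hdisj _ (Finset.insert_subset hu hSC)] at oddu
      rw [hdisj _ (Finset.insert_subset hv hSC)] at oddv
      rw [Finset.insert_inter_of_mem huX,
        Finset.card_insert_of_notMem (fun h => huS (Finset.mem_inter.mp h).1)] at oddu
      rw [Finset.insert_inter_of_notMem hvX] at oddv
      rw [Nat.odd_iff] at oddu oddv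
      omega
    have homA := hom A B hDisj edge_mk hA hB
    have homB := hom B A hDisj.symm
      (fun S T hS hT hSc hTc => by
        rw [Finset.union_comm]; exact edge_mk T S hT hS hTc hSc) hB hA
    -- build one edge and derive contradiction
    obtain ⟨S, hSA, hSc⟩ := Finset.exists_subset_card_eq (show 2 * k ≤ A.card by omega)
    obtain ⟨T, hTB, hTc⟩ := Finset.exists_subset_card_eq (show 2 * k ≤ B.card by omega)
    have he := hX _ (edge_mk S T hSA hTB hSc hTc)
    have hcardeq : ((S ∪ T) ∩ X).card = (S ∩ X).card + (T ∩ X).card := by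
      rw [Finset.union_inter_distrib_right, Finset.card_union_of_disjoint]
      exact (hDisj.mono hSA hTB).mono Finset.inter_subset_left Finset.inter_subset_left
    have hS2 : (S ∩ X).card % 2 = 0 := by
      by_cases hx : ∃ a ∈ A, a ∈ X
      · obtain ⟨a, ha, hax⟩ := hx
        have : S ∩ X = S := Finset.inter_eq_left.mpr
          (fun s hs => homA a ha s (hSA hs) hax)
        rw [this, hSc]; omega
      · have : S ∩ X = ∅ := by
          rw [Finset.eq_empty_iff_forall_notMem]
          intro s hs
          rw [Finset.mem_inter] at hs
          exact hx ⟨s, hSA hs.1, hs.2⟩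
        rw [this]; simp
    have hT2 : (T ∩ X).card % 2 = 0 := by
      by_cases hx : ∃ a ∈ B, a ∈ X
      · obtain ⟨a, ha, hax⟩ := hx
        have : T ∩ X = T := Finset.inter_eq_left.mpr
          (fun s hs => homB a ha s (hTB hs) hax)
        rw [this, hTc]; omega
      · have : T ∩ X = ∅ := by
          rw [Finset.eq_empty_iff_forall_notMem]
          intro s hs
          rw [Finset.mem_inter] at hs
          exact hx ⟨s, hTB hs.1, hs.2⟩
        rw [this]; simp
    rw [Nat.odd_iff, hcardeq] at he
    omega
end

section
/- For every positive integer k and every n ≥ 8k, there exists a 4k-uniform hypergraph on n vertices that is odd-colorable but has no odd transversal. -/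
open Finset

/-- For every `k ≥ 1` and `n ≥ 8k` there exists a `4k`-uniform hypergraph on `n`
vertices that is odd-colorable but has no odd transversal. -/

theorem exists_oddColorable_no_oddTransversal (k n : ℕ) (hk : 0 < k) (hn : 8 * k ≤ n) :
    ∃ E : Set (Finset (Fin n)),
      (∀ e ∈ E, e.card = 4 * k) ∧
      (∃ φ : Fin n → ZMod (4 * k), ∀ e ∈ E,
        ∑ v ∈ e, φ v = ((2 * k : ℕ) : ZMod (4 * k))) ∧
      ¬ ∃ X : Finset (Fin n), ∀ e ∈ E, Odd (e ∩ X).card := by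
  have hA : ∀ m ∈ Finset.Ico 0 (2*k), m < n := by intro m hm; simp [Finset.mem_Ico] at hm; omega
  have hB : ∀ m ∈ Finset.Ico (2*k) (4*k), m < n := by
    intro m hm; simp [Finset.mem_Ico] at hm; omega
  have hC : ∀ m ∈ Finset.Ico (4*k) (6*k), m < n := by
    intro m hm; simp [Finset.mem_Ico] at hm; omega
  set A : Finset (Fin n) := (Finset.Ico 0 (2*k)).attachFin hA with hAdef
  set B : Finset (Fin n) := (Finset.Ico (2*k) (4*k)).attachFin hB with hBdef
  set C : Finset (Fin n) := (Finset.Ico (4*k) (6*k)).attachFin hC with hCdef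
  have memA : ∀ v : Fin n, v ∈ A ↔ v.val < 2*k := by
    intro v; simp [hAdef, Finset.mem_attachFin, Finset.mem_Ico]
  have memB : ∀ v : Fin n, v ∈ B ↔ 2*k ≤ v.val ∧ v.val < 4*k := by
    intro v; simp [hBdef, Finset.mem_attachFin, Finset.mem_Ico]
  have memC : ∀ v : Fin n, v ∈ C ↔ 4*k ≤ v.val ∧ v.val < 6*k := by
    intro v; simp [hCdef, Finset.mem_attachFin, Finset.mem_Ico]
  have cardA : A.card = 2*k := by simp [hAdef, Finset.card_attachFin]
  have cardB : B.card = 2*k := by simp [hBdef, Finset.card_attachFin]; omega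
  have cardC : C.card = 2*k := by simp [hCdef, Finset.card_attachFin]; omega
  have dAB : Disjoint A B := by
    rw [Finset.disjoint_left]; intro v hv hv'
    rw [memA] at hv; rw [memB] at hv'; omega
  have dBC : Disjoint B C := by
    rw [Finset.disjoint_left]; intro v hv hv'
    rw [memB] at hv; rw [memC] at hv'; omega
  have dAC : Disjoint A C := by
    rw [Finset.disjoint_left]; intro v hv hv'
    rw [memA] at hv; rw [memC] at hv'; omega
  refine ⟨{A ∪ B, B ∪ C, A ∪ C}, ?_, ?_, ?_⟩
  · intro e he
    rcases he with h | h | h <;> subst h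
    · rw [Finset.card_union_of_disjoint dAB, cardA, cardB]; omega
    · rw [Finset.card_union_of_disjoint dBC, cardB, cardC]; omega
    · rw [Finset.card_union_of_disjoint dAC, cardA, cardC]; omega
  · refine ⟨fun v => if v.val = 0 ∨ v.val = 2*k ∨ v.val = 4*k then (k : ZMod (4*k)) else 0, ?_⟩
    set φ : Fin n → ZMod (4*k) :=
      fun v => if v.val = 0 ∨ v.val = 2*k ∨ v.val = 4*k then (k : ZMod (4*k)) else 0 with hφ
    have h0n : 0 < n := by omega
    have h2n : 2*k < n := by omega
    have h4n : 4*k < n := by omega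
    have sumA : ∑ v ∈ A, φ v = (k : ZMod (4*k)) := by
      rw [Finset.sum_eq_single_of_mem (⟨0, h0n⟩ : Fin n) (by rw [memA]; simpa using by omega)]
      · simp [hφ]
      · intro b hb hne
        rw [memA] at hb
        have : b.val ≠ 0 := fun h => hne (Fin.ext h)
        simp only [hφ]
        rw [if_neg]; omega
    have sumB : ∑ v ∈ B, φ v = (k : ZMod (4*k)) := by
      rw [Finset.sum_eq_single_of_mem (⟨2*k, h2n⟩ : Fin n) (by rw [memB]; constructor <;> simp <;> omega)]
      · simp [hφ]
      · intro b hb hne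
        rw [memB] at hb
        have : b.val ≠ 2*k := fun h => hne (Fin.ext h)
        simp only [hφ]
        rw [if_neg]; omega
    have sumC : ∑ v ∈ C, φ v = (k : ZMod (4*k)) := by
      rw [Finset.sum_eq_single_of_mem (⟨4*k, h4n⟩ : Fin n) (by rw [memC]; constructor <;> simp <;> omega)]
      · simp [hφ]
      · intro b hb hne
        rw [memC] at hb
        have : b.val ≠ 4*k := fun h => hne (Fin.ext h)
        simp only [hφ]
        rw [if_neg]; omega
    have hkk : (k : ZMod (4*k)) + (k : ZMod (4*k)) = ((2*k : ℕ) : ZMod (4*k)) := by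
      push_cast; ring
    intro e he
    rcases he with h | h | h <;> subst h
    · rw [Finset.sum_union dAB, sumA, sumB, hkk]
    · rw [Finset.sum_union dBC, sumB, sumC, hkk]
    · rw [Finset.sum_union dAC, sumA, sumC, hkk]
  · rintro ⟨X, hX⟩
    have h1 := hX (A ∪ B) (by left; rfl)
    have h2 := hX (B ∪ C) (by right; left; rfl)
    have h3 := hX (A ∪ C) (by right; right; rfl)
    have e1 : ((A ∪ B) ∩ X).card = (A ∩ X).card + (B ∩ X).card := by
      rw [Finset.union_inter_distrib_right,
        Finset.card_union_of_disjoint (dAB.mono Finset.inter_subset_left Finset.inter_subset_left)]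
    have e2 : ((B ∪ C) ∩ X).card = (B ∩ X).card + (C ∩ X).card := by
      rw [Finset.union_inter_distrib_right,
        Finset.card_union_of_disjoint (dBC.mono Finset.inter_subset_left Finset.inter_subset_left)]
    have e3 : ((A ∪ C) ∩ X).card = (A ∩ X).card + (C ∩ X).card := by
      rw [Finset.union_inter_distrib_right,
        Finset.card_union_of_disjoint (dAC.mono Finset.inter_subset_left Finset.inter_subset_left)]
    rw [e1, Nat.odd_iff] at h1
    rw [e2, Nat.odd_iff] at h2
    rw [e3, Nat.odd_iff] at h3
    omega
end

section
/- Let k be a positive integer and n ≥ 16k. There exists an odd-colorable 4k-uniform hypergraph G on n vertices with chromatic number exactly 3. Specifically, partition [n] into A, B, C with |A| ≥ 6k, |B| ≥ 6k, |C| ≥ 4k, and take as edges all 4k-sets e with (|e∩A|,|e∩C|) = (2k,2k), or (|e∩B|,|e∩C|) = (2k,2k), or (|e∩A|,|e∩B|) = (k,3k), or (|e∩A|,|e∩B|) = (3k,k); then G is odd-colorable, 3-chromatic, and not 2-chromatic. -/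
open Finset

/-- majority color lemma -/
lemma maj_color {n m : ℕ} (X : Finset (Fin n)) (f : Fin n → Fin 2)
    (h : 2 * m ≤ X.card) : ∃ c, m ≤ (X.filter (fun x => f x = c)).card := by
  by_contra h'
  push_neg at h'
  have h0 := h' 0
  have h1 := h' 1
  have hsum : (X.filter (fun x => f x = 0)).card
      + (X.filter (fun x => ¬ f x = 0)).card = X.card :=
    Finset.card_filter_add_card_filter_not (p := fun x => f x = 0)
  have heq : X.filter (fun x => ¬ f x = 0) = X.filter (fun x => f x = 1) := by
    apply Finset.filter_congr
    intro x _
    have := (f x).isLt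
    simp only [Fin.ext_iff, Fin.val_zero, Fin.val_one]
    omega
  rw [heq] at hsum
  omega

/-- building a monochromatic-ish edge from pieces of two disjoint parts -/
lemma edge_pieces {n : ℕ} {X Y : Finset (Fin n)} (hd : Disjoint X Y)
    {S T : Finset (Fin n)} (hS : S ⊆ X) (hT : T ⊆ Y) :
    (S ∪ T) ∩ X = S ∧ (S ∪ T) ∩ Y = T ∧ (S ∪ T).card = S.card + T.card := by
  have hST : Disjoint S T := (hd.mono hS hT)
  refine ⟨?_, ?_, Finset.card_union_of_disjoint hST⟩
  · ext x
    simp only [Finset.mem_inter, Finset.mem_union]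
    constructor
    · rintro ⟨hx | hx, hxX⟩
      · exact hx
      · exact absurd hxX (Finset.disjoint_right.mp hd (hT hx))
    · exact fun hx => ⟨Or.inl hx, hS hx⟩
  · ext x
    simp only [Finset.mem_inter, Finset.mem_union]
    constructor
    · rintro ⟨hx | hx, hxY⟩
      · exact absurd hxY (Finset.disjoint_left.mp hd (hS hx))
      · exact hx
    · exact fun hx => ⟨Or.inr hx, hT hx⟩

/-- For `k ≥ 1` and `n ≥ 16k`: partition `[n]` into `A`, `B`, `C` with `|A| ≥ 6k`,
`|B| ≥ 6k`, `|C| ≥ 4k`, and form the `4k`-graph `G` whose edges are the `4k`-sets `e`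
with `(|e∩A|,|e∩C|) = (2k,2k)`, or `(|e∩B|,|e∩C|) = (2k,2k)`, or
`(|e∩A|,|e∩B|) = (k,3k)`, or `(|e∩A|,|e∩B|) = (3k,k)`.  Then `G` is odd-colorable,
`3`-chromatic, and not `2`-chromatic (so its chromatic number is exactly 3). -/
theorem oddColorable_three_chromatic_construction (k n : ℕ) (hk : 0 < k)
    (hn : 16 * k ≤ n) (A B C : Finset (Fin n))
    (hUnion : A ∪ B ∪ C = Finset.univ)
    (hAB : Disjoint A B) (hAC : Disjoint A C) (hBC : Disjoint B C)
    (hA : 6 * k ≤ A.card) (hB : 6 * k ≤ B.card) (hC : 4 * k ≤ C.card)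
    (isEdge : Finset (Fin n) → Prop)
    (hEdge : ∀ e, isEdge e ↔ e.card = 4 * k ∧
      (((e ∩ A).card = 2 * k ∧ (e ∩ C).card = 2 * k) ∨
       ((e ∩ B).card = 2 * k ∧ (e ∩ C).card = 2 * k) ∨
       ((e ∩ A).card = k ∧ (e ∩ B).card = 3 * k) ∨
       ((e ∩ A).card = 3 * k ∧ (e ∩ B).card = k))) :
    (∃ φ : Fin n → ZMod (4 * k), ∀ e, isEdge e →
        ∑ v ∈ e, φ v = ((2 * k : ℕ) : ZMod (4 * k))) ∧
      (∃ f : Fin n → Fin 3, ∀ e, isEdge e → ∃ u ∈ e, ∃ v ∈ e, f u ≠ f v) ∧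
      ¬ ∃ f : Fin n → Fin 2, ∀ e, isEdge e → ∃ u ∈ e, ∃ v ∈ e, f u ≠ f v := by
  -- edge decomposition facts
  have hdec : ∀ e : Finset (Fin n), (e ∩ A).card + (e ∩ B).card + (e ∩ C).card = e.card := by
    intro e
    have h1 : Disjoint (e ∩ A) (e ∩ B) := hAB.mono inter_subset_right inter_subset_right
    have h2 : Disjoint (e ∩ A ∪ e ∩ B) (e ∩ C) :=
      (Finset.disjoint_union_left).mpr
        ⟨hAC.mono inter_subset_right inter_subset_right,
         hBC.mono inter_subset_right inter_subset_right⟩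
    have he : (e ∩ A ∪ e ∩ B) ∪ e ∩ C = e := by
      rw [← Finset.inter_union_distrib_left, ← Finset.inter_union_distrib_left, hUnion,
        Finset.inter_univ]
    calc (e ∩ A).card + (e ∩ B).card + (e ∩ C).card
        = (e ∩ A ∪ e ∩ B).card + (e ∩ C).card := by
          rw [Finset.card_union_of_disjoint h1]
      _ = ((e ∩ A ∪ e ∩ B) ∪ e ∩ C).card := (Finset.card_union_of_disjoint h2).symm
      _ = e.card := by rw [he]
  refine ⟨?_, ?_, ?_⟩
  · -- odd colorable
    refine ⟨fun v => if v ∈ A then 1 else if v ∈ B then -1 else 0, ?_⟩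
    intro e he
    rw [hEdge] at he
    obtain ⟨hcard, hcases⟩ := he
    have hd := hdec e
    rw [hcard] at hd
    -- split sum
    have h1 : Disjoint (e ∩ A) (e ∩ B) := hAB.mono inter_subset_right inter_subset_right
    have h2 : Disjoint (e ∩ A ∪ e ∩ B) (e ∩ C) :=
      (Finset.disjoint_union_left).mpr
        ⟨hAC.mono inter_subset_right inter_subset_right,
         hBC.mono inter_subset_right inter_subset_right⟩
    have he' : (e ∩ A ∪ e ∩ B) ∪ e ∩ C = e := by
      rw [← Finset.inter_union_distrib_left, ← Finset.inter_union_distrib_left, hUnion,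
        Finset.inter_univ]
    have hsplit : ∑ v ∈ e, (if v ∈ A then (1 : ZMod (4*k)) else if v ∈ B then -1 else 0)
        = ((e ∩ A).card : ZMod (4*k)) - ((e ∩ B).card : ZMod (4*k)) := by
      conv_lhs => rw [← he']
      rw [Finset.sum_union h2, Finset.sum_union h1]
      have sA : ∑ v ∈ e ∩ A, (if v ∈ A then (1 : ZMod (4*k)) else if v ∈ B then -1 else 0)
          = ((e ∩ A).card : ZMod (4*k)) := by
        calc ∑ v ∈ e ∩ A, (if v ∈ A then (1 : ZMod (4*k)) else if v ∈ B then -1 else 0)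
            = ∑ _v ∈ e ∩ A, (1 : ZMod (4*k)) :=
              Finset.sum_congr rfl (fun v hv => by simp [(Finset.mem_inter.mp hv).2])
          _ = ((e ∩ A).card : ZMod (4*k)) := by simp
      have sB : ∑ v ∈ e ∩ B, (if v ∈ A then (1 : ZMod (4*k)) else if v ∈ B then -1 else 0)
          = -((e ∩ B).card : ZMod (4*k)) := by
        calc ∑ v ∈ e ∩ B, (if v ∈ A then (1 : ZMod (4*k)) else if v ∈ B then -1 else 0)
            = ∑ _v ∈ e ∩ B, (-1 : ZMod (4*k)) :=
              Finset.sum_congr rfl (fun v hv => by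
                have hvB := (Finset.mem_inter.mp hv).2
                have hvA : v ∉ A := Finset.disjoint_right.mp hAB hvB
                simp [hvA, hvB])
          _ = -((e ∩ B).card : ZMod (4*k)) := by simp
      have sC : ∑ v ∈ e ∩ C, (if v ∈ A then (1 : ZMod (4*k)) else if v ∈ B then -1 else 0)
          = 0 := by
        calc ∑ v ∈ e ∩ C, (if v ∈ A then (1 : ZMod (4*k)) else if v ∈ B then -1 else 0)
            = ∑ _v ∈ e ∩ C, (0 : ZMod (4*k)) :=
              Finset.sum_congr rfl (fun v hv => by
                have hvC := (Finset.mem_inter.mp hv).2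
                have hvA : v ∉ A := Finset.disjoint_right.mp hAC hvC
                have hvB : v ∉ B := Finset.disjoint_right.mp hBC hvC
                simp [hvA, hvB])
          _ = 0 := by simp
      rw [sA, sB, sC]
      ring
    rw [hsplit]
    have h4 : ((4 * k : ℕ) : ZMod (4 * k)) = 0 := ZMod.natCast_self _
    push_cast at h4 ⊢
    rcases hcases with ⟨hA', hC'⟩ | ⟨hB', hC'⟩ | ⟨hA', hB'⟩ | ⟨hA', hB'⟩
    · have hB' : (e ∩ B).card = 0 := by omega
      rw [hA', hB']
      push_cast
      ring
    · have hA' : (e ∩ A).card = 0 := by omega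
      rw [hA', hB']
      push_cast
      linear_combination -h4
    · rw [hA', hB']
      push_cast
      linear_combination -h4
    · rw [hA', hB']
      push_cast
      ring
  · -- 3-chromatic upper bound
    refine ⟨fun v => if v ∈ A then 0 else if v ∈ B then 1 else 2, ?_⟩
    intro e he
    rw [hEdge] at he
    obtain ⟨hcard, hcases⟩ := he
    have hkpos : 0 < k := hk
    rcases hcases with ⟨hA', hC'⟩ | ⟨hB', hC'⟩ | ⟨hA', hB'⟩ | ⟨hA', hB'⟩
    · obtain ⟨u, hu⟩ := Finset.card_pos.mp (by omega : 0 < (e ∩ A).card)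
      obtain ⟨v, hv⟩ := Finset.card_pos.mp (by omega : 0 < (e ∩ C).card)
      obtain ⟨hue, huA⟩ := Finset.mem_inter.mp hu
      obtain ⟨hve, hvC⟩ := Finset.mem_inter.mp hv
      have hvA : v ∉ A := Finset.disjoint_right.mp hAC hvC
      have hvB : v ∉ B := Finset.disjoint_right.mp hBC hvC
      exact ⟨u, hue, v, hve, by simp [huA, hvA, hvB]⟩
    · obtain ⟨u, hu⟩ := Finset.card_pos.mp (by omega : 0 < (e ∩ B).card)
      obtain ⟨v, hv⟩ := Finset.card_pos.mp (by omega : 0 < (e ∩ C).card)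
      obtain ⟨hue, huB⟩ := Finset.mem_inter.mp hu
      obtain ⟨hve, hvC⟩ := Finset.mem_inter.mp hv
      have huA : u ∉ A := Finset.disjoint_right.mp hAB huB
      have hvA : v ∉ A := Finset.disjoint_right.mp hAC hvC
      have hvB : v ∉ B := Finset.disjoint_right.mp hBC hvC
      exact ⟨u, hue, v, hve, by simp [huA, huB, hvA, hvB]⟩
    · obtain ⟨u, hu⟩ := Finset.card_pos.mp (by omega : 0 < (e ∩ A).card)
      obtain ⟨v, hv⟩ := Finset.card_pos.mp (by omega : 0 < (e ∩ B).card)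
      obtain ⟨hue, huA⟩ := Finset.mem_inter.mp hu
      obtain ⟨hve, hvB⟩ := Finset.mem_inter.mp hv
      have hvA : v ∉ A := Finset.disjoint_right.mp hAB hvB
      exact ⟨u, hue, v, hve, by simp [huA, hvA, hvB]⟩
    · obtain ⟨u, hu⟩ := Finset.card_pos.mp (by omega : 0 < (e ∩ A).card)
      obtain ⟨v, hv⟩ := Finset.card_pos.mp (by omega : 0 < (e ∩ B).card)
      obtain ⟨hue, huA⟩ := Finset.mem_inter.mp hu
      obtain ⟨hve, hvB⟩ := Finset.mem_inter.mp hv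
      have hvA : v ∉ A := Finset.disjoint_right.mp hAB hvB
      exact ⟨u, hue, v, hve, by simp [huA, hvA, hvB]⟩
  · -- not 2-chromatic
    rintro ⟨f, hf⟩
    obtain ⟨a, ha⟩ := maj_color A f (by omega : 2 * (3 * k) ≤ A.card)
    obtain ⟨b, hb⟩ := maj_color B f (by omega : 2 * (3 * k) ≤ B.card)
    obtain ⟨c, hc⟩ := maj_color C f (by omega : 2 * (2 * k) ≤ C.card)
    set Aa := A.filter (fun x => f x = a) with hAa
    set Bb := B.filter (fun x => f x = b) with hBb
    set Cc := C.filter (fun x => f x = c) with hCc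
    have hAaA : Aa ⊆ A := Finset.filter_subset _ _
    have hBbB : Bb ⊆ B := Finset.filter_subset _ _
    have hCcC : Cc ⊆ C := Finset.filter_subset _ _
    by_cases hac : a = c
    · -- type 1 monochromatic edge
      obtain ⟨S, hS, hScard⟩ := Finset.exists_subset_card_eq (by omega : 2 * k ≤ Aa.card)
      obtain ⟨T, hT, hTcard⟩ := Finset.exists_subset_card_eq (by omega : 2 * k ≤ Cc.card)
      obtain ⟨hiA, hiC, hcard⟩ := edge_pieces hAC (hS.trans hAaA) (hT.trans hCcC)
      have hedge : isEdge (S ∪ T) := by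
        rw [hEdge]
        exact ⟨by rw [hcard]; omega, Or.inl ⟨by rw [hiA, hScard], by rw [hiC, hTcard]⟩⟩
      obtain ⟨u, hu, v, hv, huv⟩ := hf _ hedge
      have hval : ∀ x ∈ S ∪ T, f x = a := by
        intro x hx
        rcases Finset.mem_union.mp hx with hx | hx
        · exact (Finset.mem_filter.mp (hS hx)).2
        · rw [(Finset.mem_filter.mp (hT hx)).2, hac]
      exact huv ((hval u hu).trans (hval v hv).symm)
    · by_cases hbc : b = c
      · -- type 2 monochromatic edge
        obtain ⟨S, hS, hScard⟩ := Finset.exists_subset_card_eq (by omega : 2 * k ≤ Bb.card)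
        obtain ⟨T, hT, hTcard⟩ := Finset.exists_subset_card_eq (by omega : 2 * k ≤ Cc.card)
        obtain ⟨hiB, hiC, hcard⟩ := edge_pieces hBC (hS.trans hBbB) (hT.trans hCcC)
        have hedge : isEdge (S ∪ T) := by
          rw [hEdge]
          exact ⟨by rw [hcard]; omega,
            Or.inr (Or.inl ⟨by rw [hiB, hScard], by rw [hiC, hTcard]⟩)⟩
        obtain ⟨u, hu, v, hv, huv⟩ := hf _ hedge
        have hval : ∀ x ∈ S ∪ T, f x = b := by
          intro x hx
          rcases Finset.mem_union.mp hx with hx | hx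
          · exact (Finset.mem_filter.mp (hS hx)).2
          · rw [(Finset.mem_filter.mp (hT hx)).2, hbc]
        exact huv ((hval u hu).trans (hval v hv).symm)
      · -- a = b, type 3 monochromatic edge
        have hab : a = b := by
          have ha2 := a.isLt; have hb2 := b.isLt; have hc2 := c.isLt
          rw [Fin.ext_iff] at hac hbc ⊢
          omega
        obtain ⟨S, hS, hScard⟩ := Finset.exists_subset_card_eq (by omega : k ≤ Aa.card)
        obtain ⟨T, hT, hTcard⟩ := Finset.exists_subset_card_eq (by omega : 3 * k ≤ Bb.card)
        obtain ⟨hiA, hiB, hcard⟩ := edge_pieces hAB (hS.trans hAaA) (hT.trans hBbB)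
        have hedge : isEdge (S ∪ T) := by
          rw [hEdge]
          exact ⟨by rw [hcard]; omega,
            Or.inr (Or.inr (Or.inl ⟨by rw [hiA, hScard], by rw [hiB, hTcard]⟩))⟩
        obtain ⟨u, hu, v, hv, huv⟩ := hf _ hedge
        have hval : ∀ x ∈ S ∪ T, f x = a := by
          intro x hx
          rcases Finset.mem_union.mp hx with hx | hx
          · exact (Finset.mem_filter.mp (hS hx)).2
          · rw [(Finset.mem_filter.mp (hT hx)).2, hab]
        exact huv ((hval u hu).trans (hval v hv).symm)
end

section
/- Let r ≥ 2 be even and let A be an odd-colorable cubical complex r-matrix of order n with odd-coloring φ. If λ is an eigenvalue of A with eigenvector x, then -λ is an eigenvalue of A with eigenvector y given by y_k = e^{2πi φ(k)/r} x_k. Hence the spectrum of A is geosymmetric. -/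
open Finset Complex

/-- `λ` is an eigenvalue of the cubical `r`-matrix `A` with eigenvector `x`:
`λ x_k^{r-1} = ∑_{i₂,…,i_r} a_{k,i₂,…,i_r} x_{i₂} ⋯ x_{i_r}` for all `k`. -/
def IsEigenpair {r n : ℕ} (hr : 0 < r) (A : (Fin r → Fin n) → ℂ)
    (lam : ℂ) (x : Fin n → ℂ) : Prop :=
  x ≠ 0 ∧ ∀ k : Fin n, lam * x k ^ (r - 1) =
    ∑ i : Fin r → Fin n, if i ⟨0, hr⟩ = k then
      A i * ∏ j ∈ Finset.univ.erase (⟨0, hr⟩ : Fin r), x (i j) else 0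

/-! Scaling `x_k` by `c_k`, where every `c_k` is an `r`-th root of unity and
`∏ⱼ c_{i_j} = -1` whenever `a_i ≠ 0`, multiplies `x_k^{r-1}` by `c_k⁻¹` and the `k`-th sum by
`-c_k⁻¹`, so `λ` becomes `-λ`. For an odd-coloring `φ` take `c_k = e^{2πi φ(k)/r}`, the standard
additive character of `ZMod r` at `φ(k)`: the product over an index tuple is the character at
`∑ⱼ φ(i_j) = r/2`, which is `-1`. -/

theorem AddChar.map_sum_eq_prod {ι A M : Type*} [AddCommMonoid A] [CommMonoid M]
    (ψ : AddChar A M) (s : Finset ι) (f : ι → A) :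
    ψ (∑ i ∈ s, f i) = ∏ i ∈ s, ψ (f i) := by
  classical
  induction s using Finset.induction_on with
  | empty => simp
  | insert a s ha ih => rw [Finset.sum_insert ha, Finset.prod_insert ha, ψ.map_add_eq_mul, ih]

theorem ZMod.stdAddChar_natCast_half {r : ℕ} [NeZero r] (hr : Even r) :
    ZMod.stdAddChar ((r / 2 : ℕ) : ZMod r) = -1 := by
  obtain ⟨m, rfl⟩ := hr
  have hm : (m : ℂ) ≠ 0 := by
    have := NeZero.ne (m + m); norm_cast; omega
  rw [ZMod.stdAddChar_apply, ZMod.toCircle_natCast, show (m + m) / 2 = m by omega,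
    ← exp_pi_mul_I]
  congr 1
  push_cast
  field_simp
  ring

theorem ZMod.stdAddChar_pow_self {r : ℕ} [NeZero r] (a : ZMod r) :
    ZMod.stdAddChar a ^ r = 1 := by
  rw [← AddChar.map_nsmul_eq_pow, nsmul_eq_mul, ZMod.natCast_self, zero_mul,
    AddChar.map_zero_eq_one]

namespace IsEigenpair

variable {r n : ℕ} {hr : 0 < r} {A : (Fin r → Fin n) → ℂ} {lam : ℂ} {x : Fin n → ℂ}

theorem neg_of_prod_eq_neg_one (h : IsEigenpair hr A lam x) (c : Fin n → ℂ)
    (hc : ∀ k, c k ^ r = 1) (hcA : ∀ i, A i ≠ 0 → ∏ j, c (i j) = -1) :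
    IsEigenpair hr A (-lam) (fun k => c k * x k) := by
  obtain ⟨hx, heq⟩ := h
  have hc0 (k : Fin n) : c k ≠ 0 := by
    rintro hck
    simpa [hck, zero_pow hr.ne'] using hc k
  refine ⟨fun hcx => hx (funext fun k => ?_), fun k => ?_⟩
  · simpa [hc0 k] using congrFun hcx k
  set o : Fin r := ⟨0, hr⟩
  have hterm (i : Fin r → Fin n) (hik : i o = k) :
      c k * (A i * ∏ j ∈ univ.erase o, c (i j) * x (i j)) =
        -(A i * ∏ j ∈ univ.erase o, x (i j)) := by
    by_cases hA : A i = 0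
    · simp [hA]
    have hprod : c k * ∏ j ∈ univ.erase o, c (i j) = -1 := by
      rw [← hik, mul_prod_erase univ (fun j => c (i j)) (mem_univ o), hcA i hA]
    calc c k * (A i * ∏ j ∈ univ.erase o, c (i j) * x (i j))
        = (c k * ∏ j ∈ univ.erase o, c (i j)) * (A i * ∏ j ∈ univ.erase o, x (i j)) := by
          rw [prod_mul_distrib]; ring
      _ = _ := by rw [hprod]; ring
  apply mul_left_cancel₀ (hc0 k)
  calc c k * (-lam * (c k * x k) ^ (r - 1))
      = -(c k * c k ^ (r - 1)) * (lam * x k ^ (r - 1)) := by ring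
    _ = -(lam * x k ^ (r - 1)) := by rw [mul_pow_sub_one hr.ne', hc k]; ring
    _ = c k * ∑ i : Fin r → Fin n, if i o = k then
          A i * ∏ j ∈ univ.erase o, c (i j) * x (i j) else 0 := by
      rw [heq k, mul_sum, ← sum_neg_distrib]
      refine sum_congr rfl fun i _ => ?_
      split_ifs with hik
      · exact (hterm i hik).symm
      · simp

end IsEigenpair

theorem oddColorable_spectrum_geosymmetric_general (r n : ℕ) (hr : 0 < r)
    (hre : Even r) (A : (Fin r → Fin n) → ℂ) (φ : Fin n → ZMod r)
    (hφ : ∀ i : Fin r → Fin n, A i ≠ 0 →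
      ∑ j : Fin r, φ (i j) = ((r / 2 : ℕ) : ZMod r))
    (lam : ℂ) (x : Fin n → ℂ) (h : IsEigenpair hr A lam x) :
    IsEigenpair hr A (-lam)
      (fun k => Complex.exp (2 * Real.pi * Complex.I * ((φ k).val : ℂ) / r) * x k) := by
  have : NeZero r := ⟨hr.ne'⟩
  have hc (k : Fin n) : ZMod.stdAddChar (φ k) =
      Complex.exp (2 * Real.pi * Complex.I * ((φ k).val : ℂ) / r) := by
    rw [ZMod.stdAddChar_apply, ZMod.toCircle_apply]
  simp only [← hc]
  refine h.neg_of_prod_eq_neg_one _ (fun k => ZMod.stdAddChar_pow_self _) fun i hA => ?_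
  rw [← AddChar.map_sum_eq_prod, hφ i hA, ZMod.stdAddChar_natCast_half hre]

/-- Let `r ≥ 2` be even and `A` an odd-colorable cubical complex `r`-matrix with
odd-coloring `φ`.  If `λ` is an eigenvalue of `A` with eigenvector `x`, then `-λ` is an
eigenvalue of `A` with eigenvector `y`, `y_k = e^{2πi φ(k)/r} x_k`.  Hence the spectrum
of `A` is geosymmetric. -/
theorem oddColorable_spectrum_geosymmetric (r n : ℕ) (hr : 0 < r) (hr2 : 2 ≤ r)
    (hre : Even r) (A : (Fin r → Fin n) → ℂ) (φ : Fin n → ZMod r)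
    (hφ : ∀ i : Fin r → Fin n, A i ≠ 0 →
      ∑ j : Fin r, φ (i j) = ((r / 2 : ℕ) : ZMod r))
    (lam : ℂ) (x : Fin n → ℂ) (h : IsEigenpair hr A lam x) :
    IsEigenpair hr A (-lam)
      (fun k => Complex.exp (2 * Real.pi * Complex.I * ((φ k).val : ℂ) / r) * x k) :=
  oddColorable_spectrum_geosymmetric_general r n hr hre A φ hφ lam x h
end

section
/- Shao's similarity lemma: Let A be a cubical r-matrix of order n over ℂ and let z = (z₁,...,z_n) be a vector with nonzero complex entries. Define B by b_{j₁,...,j_r} = z_{j₁}^{-r} a_{j₁,...,j_r} z_{j₁}···z_{j_r}. Then λ is an eigenvalue of A with eigenvector x if and only if λ is an eigenvalue of B with eigenvector (x₁/z₁, ..., x_n/z_n). In particular A and B have the same eigenvalues. -/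
open Finset

/-
Rescaling the eigenvector by `y_k = x_k / z_k` multiplies the `k`-th eigen-equation of `A` by the
nonzero factor `z_k^{-(r-1)}`: the weight `z_{j₁}^{-r} z_{j₁} ⋯ z_{j_r}` in `B` contributes
`z_k^{1-r}` from the first index and cancels the divisions by `z_{j₂}, …, z_{j_r}` in the monomial.
-/

section Rescaling

variable {K : Type*} [Field K] {r n : ℕ}

theorem inv_pow_mul_self_of_pos {a : K} (ha : a ≠ 0) (hr : 0 < r) :
    a⁻¹ ^ r * a = a⁻¹ ^ (r - 1) := by
  obtain ⟨s, rfl⟩ := Nat.exists_eq_add_of_lt hr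
  simp [pow_succ, mul_assoc, inv_mul_cancel₀ ha]

theorem rescaled_monomial_eq (hr : 0 < r) (A : (Fin r → Fin n) → K) {z : Fin n → K}
    (hz : ∀ k, z k ≠ 0) (x : Fin n → K) (i : Fin r → Fin n) :
    (z (i ⟨0, hr⟩))⁻¹ ^ r * A i * (∏ j, z (i j)) *
        ∏ j ∈ univ.erase (⟨0, hr⟩ : Fin r), x (i j) / z (i j) =
      (z (i ⟨0, hr⟩))⁻¹ ^ (r - 1) * (A i * ∏ j ∈ univ.erase (⟨0, hr⟩ : Fin r), x (i j)) := by
  have hP : ∏ j ∈ univ.erase (⟨0, hr⟩ : Fin r), z (i j) ≠ 0 :=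
    prod_ne_zero_iff.mpr fun j _ => hz _
  rw [← mul_prod_erase univ (fun j => z (i j)) (mem_univ ⟨0, hr⟩), prod_div_distrib,
    ← inv_pow_mul_self_of_pos (hz _) hr]
  field_simp

theorem rescaled_eigensum_eq (hr : 0 < r) (A : (Fin r → Fin n) → K) {z : Fin n → K}
    (hz : ∀ k, z k ≠ 0) (x : Fin n → K) (k : Fin n) :
    (∑ i : Fin r → Fin n, if i ⟨0, hr⟩ = k then
        (z (i ⟨0, hr⟩))⁻¹ ^ r * A i * (∏ j, z (i j)) *
          ∏ j ∈ univ.erase (⟨0, hr⟩ : Fin r), x (i j) / z (i j) else 0) =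
      (z k)⁻¹ ^ (r - 1) * ∑ i : Fin r → Fin n, if i ⟨0, hr⟩ = k then
        A i * ∏ j ∈ univ.erase (⟨0, hr⟩ : Fin r), x (i j) else 0 := by
  rw [mul_sum]
  refine sum_congr rfl fun i _ => ?_
  split_ifs with hi
  · rw [rescaled_monomial_eq hr A hz, hi]
  · rw [mul_zero]

theorem div_eq_zero_iff_of_ne_zero {x z : Fin n → K} (hz : ∀ k, z k ≠ 0) :
    (fun k => x k / z k) = 0 ↔ x = 0 := by
  simp only [funext_iff, Pi.zero_apply, div_eq_zero_iff, hz, or_false]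

end Rescaling

theorem isEigenpair_iff_isEigenpair_rescaled {r n : ℕ} (hr : 0 < r) (A : (Fin r → Fin n) → ℂ)
    {z : Fin n → ℂ} (hz : ∀ k, z k ≠ 0) (lam : ℂ) (x : Fin n → ℂ) :
    IsEigenpair hr A lam x ↔
      IsEigenpair hr (fun i => (z (i ⟨0, hr⟩))⁻¹ ^ r * A i * ∏ j : Fin r, z (i j)) lam
        (fun k => x k / z k) := by
  refine and_congr (div_eq_zero_iff_of_ne_zero hz).symm.not (forall_congr' fun k => ?_)
  have hlam : lam * (x k / z k) ^ (r - 1) = (z k)⁻¹ ^ (r - 1) * (lam * x k ^ (r - 1)) := by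
    rw [div_pow, inv_pow]
    ring
  rw [rescaled_eigensum_eq hr A hz, hlam,
    mul_right_inj' (pow_ne_zero _ (inv_ne_zero (hz k)))]

/-- Shao's similarity lemma: for a vector `z` with nonzero entries, define
`b_{j₁,…,j_r} = z_{j₁}^{-r} a_{j₁,…,j_r} z_{j₁} ⋯ z_{j_r}`.  Then `(λ, x)` is an
eigenpair of `A` iff `(λ, x/z)` is an eigenpair of `B`; in particular `A` and `B`
have the same eigenvalues. -/
theorem shao_similarity (r n : ℕ) (hr : 0 < r) (A : (Fin r → Fin n) → ℂ)
    (z : Fin n → ℂ) (hz : ∀ k, z k ≠ 0)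
    (B : (Fin r → Fin n) → ℂ)
    (hB : B = fun i => (z (i ⟨0, hr⟩))⁻¹ ^ r * A i * ∏ j : Fin r, z (i j)) :
    (∀ (lam : ℂ) (x : Fin n → ℂ),
        IsEigenpair hr A lam x ↔ IsEigenpair hr B lam (fun k => x k / z k)) ∧
      (∀ lam : ℂ, (∃ x, IsEigenpair hr A lam x) ↔ ∃ y, IsEigenpair hr B lam y) := by
  subst hB
  have key := isEigenpair_iff_isEigenpair_rescaled hr A hz
  refine ⟨key, fun lam => ⟨fun ⟨x, hx⟩ => ⟨_, (key lam x).mp hx⟩, fun ⟨y, hy⟩ => ?_⟩⟩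
  refine ⟨fun k => y k * z k, (key lam _).mpr ?_⟩
  simpa only [mul_div_cancel_right₀ _ (hz _)] using hy
end

section
/- Let r ≥ 2 be even and let A be a cubical real r-matrix with an odd transversal X. If λ is an H-eigenvalue of A with real eigenvector x, then -λ is an H-eigenvalue of A with eigenvector y where y_k = -x_k for k ∈ X and y_k = x_k otherwise. Hence the H-spectrum of A is symmetric (and geosymmetric via the orthogonal diagonal sign operator). -/
open Finset

/-- `λ ∈ ℝ` is an `H`-eigenvalue of the real cubical `r`-matrix `A` with real
eigenvector `x`. -/
def IsHEigenpair {r n : ℕ} (hr : 0 < r) (A : (Fin r → Fin n) → ℝ)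
    (lam : ℝ) (x : Fin n → ℝ) : Prop :=
  x ≠ 0 ∧ ∀ k : Fin n, lam * x k ^ (r - 1) =
    ∑ i : Fin r → Fin n, if i ⟨0, hr⟩ = k then
      A i * ∏ j ∈ Finset.univ.erase (⟨0, hr⟩ : Fin r), x (i j) else 0

/-- Let `r ≥ 2` be even and let `A` be a real cubical `r`-matrix with odd transversal
`X`.  If `λ` is an `H`-eigenvalue of `A` with eigenvector `x`, then `-λ` is an
`H`-eigenvalue of `A` with eigenvector `y`, where `y_k = -x_k` for `k ∈ X` and
`y_k = x_k` otherwise.  Hence the `H`-spectrum of `A` is symmetric. -/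
theorem oddTransversal_H_spectrum_symmetric (r n : ℕ) (hr : 0 < r) (hr2 : 2 ≤ r)
    (hre : Even r) (A : (Fin r → Fin n) → ℝ) (X : Finset (Fin n))
    (hX : ∀ i : Fin r → Fin n, A i ≠ 0 →
      Odd (Finset.univ.filter (fun j : Fin r => i j ∈ X)).card)
    (lam : ℝ) (x : Fin n → ℝ) (h : IsHEigenpair hr A lam x) :
    IsHEigenpair hr A (-lam) (fun k => if k ∈ X then -x k else x k) := by
  obtain ⟨hx, heig⟩ := h
  have hodd1 : Odd (r - 1) := Nat.Even.sub_odd hr hre odd_one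
  constructor
  · intro hy
    apply hx
    funext k
    have hk := congrFun hy k
    simp only [Pi.zero_apply] at hk ⊢
    by_cases hkX : k ∈ X
    · simp only [hkX, if_true] at hk; linarith
    · simpa [hkX] using hk
  · intro k
    set z : Fin r := ⟨0, hr⟩ with hz
    have key : ∀ i : Fin r → Fin n, i z = k →
        (A i * ∏ j ∈ Finset.univ.erase z,
          (fun k => if k ∈ X then -x k else x k) (i j))
        = (if k ∈ X then (1:ℝ) else -1) * (A i * ∏ j ∈ Finset.univ.erase z, x (i j)) := by
      intro i hi
      by_cases hA : A i = 0
      · simp [hA]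
      have hodd := hX i hA
      have hprod : (∏ j ∈ Finset.univ.erase z,
            (fun k => if k ∈ X then -x k else x k) (i j))
          = (-1 : ℝ) ^ ((Finset.univ.erase z).filter (fun j => i j ∈ X)).card
            * ∏ j ∈ Finset.univ.erase z, x (i j) := by
        have : ∀ j, (fun k => if k ∈ X then -x k else x k) (i j)
            = (if i j ∈ X then (-1:ℝ) else 1) * x (i j) := by
          intro j; by_cases hj : i j ∈ X <;> simp [hj]
        rw [Finset.prod_congr rfl (fun j _ => this j), Finset.prod_mul_distrib,
          Finset.prod_ite, Finset.prod_const, Finset.prod_const, one_pow, mul_one]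
      have hfe : (Finset.univ.erase z).filter (fun j => i j ∈ X)
          = (Finset.univ.filter (fun j => i j ∈ X)).erase z := by
        ext j; simp [Finset.mem_erase, Finset.mem_filter, and_comm, and_left_comm]
      have hsign : (-1 : ℝ) ^ ((Finset.univ.erase z).filter (fun j => i j ∈ X)).card
          = (if k ∈ X then (1:ℝ) else -1) := by
        rw [hfe]
        by_cases hkX : k ∈ X
        · have hzmem : z ∈ Finset.univ.filter (fun j => i j ∈ X) := by
            simp [hi, hkX]
          rw [Finset.card_erase_of_mem hzmem]
          have : Even ((Finset.univ.filter (fun j => i j ∈ X)).card - 1) :=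
            Nat.Odd.sub_odd hodd odd_one
          simp [hkX, this.neg_one_pow]
        · have hzmem : z ∉ Finset.univ.filter (fun j => i j ∈ X) := by
            simp [hi, hkX]
          rw [Finset.erase_eq_of_notMem hzmem]
          simp [hkX, hodd.neg_one_pow]
      rw [hprod, hsign]; ring
    have hsum : (∑ i : Fin r → Fin n, if i z = k then
          A i * ∏ j ∈ Finset.univ.erase z,
            (fun k => if k ∈ X then -x k else x k) (i j) else 0)
        = (if k ∈ X then (1:ℝ) else -1) *
          ∑ i : Fin r → Fin n, if i z = k then
            A i * ∏ j ∈ Finset.univ.erase z, x (i j) else 0 := by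
      rw [Finset.mul_sum]
      refine Finset.sum_congr rfl fun i _ => ?_
      by_cases hi : i z = k
      · rw [if_pos hi, if_pos hi, key i hi]
      · simp [hi]
    rw [hsum, ← heig k]
    by_cases hkX : k ∈ X
    · simp only [hkX, if_true]
      rw [hodd1.neg_pow]; ring
    · simp only [hkX, if_false]
      ring
end

section
/- Let A be the cubical 3-matrix of order 6 with a_{1,2,3} = a_{2,3,4} = a_{3,4,5} = a_{4,5,6} = a_{5,6,1} = a_{6,1,2} = 1 and all other entries zero. Then the spectral radius of A is 1, and -1 is an eigenvalue of A with eigenvector (e^{2πi/6}, e^{4πi/6}, e^{6πi/6}, e^{8πi/6}, e^{10πi/6}, e^{12πi/6}). In particular, the conclusion of the theorem that -ρ(A) being an eigenvalue forces r even fails for non-symmetric matrices. -/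
/-!
With `a_{k,k+1,k+2} = 1` (indices mod `n`) the eigenequations read
`λ x_k² = x_{k+1} x_{k+2}`. For `λ ≠ 0` a vanishing coordinate forces the previous one to
vanish, so an eigenvector has no zero coordinate; multiplying all `n` equations gives
`λⁿ P² = P²` with `P = ∏ x_k ≠ 0`, hence `λⁿ = 1` and `|λ| ≤ 1`. Conversely, for every
`n`-th root of unity `ζ` the vector `(ζ^(k+1))_k` is an eigenvector for `ζ³`; for `n = 6` and
`ζ = e^{2πi/6}` this is `-1`.
-/

open Finset

def cyclicCubical (n : ℕ) [NeZero n] : (Fin 3 → Fin n) → ℂ :=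
  fun i => if i 1 = i 0 + 1 ∧ i 2 = i 0 + 2 then 1 else 0

section CyclicEigen

variable {R : Type*} [CommRing R] [IsDomain R] {n : ℕ} [NeZero n] {lam : R} {x : Fin n → R}

open Fin.NatCast in
lemma eq_zero_of_cyclic_eigen (hx : ∀ k, lam * x k ^ 2 = x (k + 1) * x (k + 2))
    (hlam : lam ≠ 0) {j : Fin n} (hj : x j = 0) : x = 0 := by
  have step : ∀ k, x (k + 1) = 0 → x k = 0 := fun k hk => by
    simpa [hk, hlam] using hx k
  have back : ∀ m : ℕ, x (j - m) = 0 := by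
    intro m
    induction m with
    | zero => simpa using hj
    | succ m ih => exact step _ (by rwa [Nat.cast_succ, sub_add_eq_sub_sub, sub_add_cancel])
  funext k
  simpa using back (j - k : Fin n)

lemma pow_eq_one_of_cyclic_eigen (hx : ∀ k, lam * x k ^ 2 = x (k + 1) * x (k + 2))
    (hlam : lam ≠ 0) (hx0 : x ≠ 0) : lam ^ n = 1 := by
  have hP : ∏ k, x k ≠ 0 :=
    Finset.prod_ne_zero_iff.2 fun k _ hk => hx0 (eq_zero_of_cyclic_eigen hx hlam hk)
  have shift (c : Fin n) : ∏ k, x (k + c) = ∏ k, x k :=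
    Fintype.prod_equiv (Equiv.addRight c) _ _ fun _ => rfl
  refine mul_right_cancel₀ (pow_ne_zero 2 hP) ?_
  calc lam ^ n * (∏ k, x k) ^ 2 = ∏ k, lam * x k ^ 2 := by
        rw [Finset.prod_mul_distrib, Finset.prod_const, Finset.prod_pow, Finset.card_univ,
          Fintype.card_fin]
    _ = ∏ k, x (k + 1) * x (k + 2) := Finset.prod_congr rfl fun k _ => hx k
    _ = 1 * (∏ k, x k) ^ 2 := by rw [Finset.prod_mul_distrib, shift, shift, one_mul, sq]

end CyclicEigen

open Fin.NatCast in
lemma pow_val_natCast_of_pow_eq_one {M : Type*} [Monoid M] {n : ℕ} [NeZero n] {ζ : M}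
    (hζ : ζ ^ n = 1) (a : ℕ) : ζ ^ ((a : Fin n) : ℕ) = ζ ^ a := by
  rw [Fin.val_natCast, ← pow_eq_pow_mod a hζ]

section CyclicCubical

variable {n : ℕ} [NeZero n]

lemma eigenSum_cyclicCubical (x : Fin n → ℂ) (k : Fin n) :
    (∑ i : Fin 3 → Fin n, if i ⟨0, by norm_num⟩ = k then
      cyclicCubical n i * ∏ j ∈ Finset.univ.erase (⟨0, by norm_num⟩ : Fin 3), x (i j) else 0)
      = x (k + 1) * x (k + 2) := by
  have herase : Finset.univ.erase (0 : Fin 3) = {1, 2} := by decide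
  rw [Finset.sum_eq_single ![k, k + 1, k + 2]]
  · simp [cyclicCubical, herase]
  · intro i _ hi
    have hA : i 0 = k → cyclicCubical n i = 0 := by
      rintro rfl
      refine if_neg fun ⟨h1, h2⟩ => hi ?_
      funext j
      fin_cases j <;> simp [h1, h2]
    split_ifs with h0
    · rw [hA h0, zero_mul]
    · rfl
  · simp

lemma isEigenpair_cyclicCubical_iff (lam : ℂ) (x : Fin n → ℂ) :
    IsEigenpair (by norm_num) (cyclicCubical n) lam x ↔
      x ≠ 0 ∧ ∀ k, lam * x k ^ 2 = x (k + 1) * x (k + 2) := by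
  simp only [IsEigenpair, eigenSum_cyclicCubical]

lemma norm_le_one_of_isEigenpair_cyclicCubical {lam : ℂ} {x : Fin n → ℂ}
    (h : IsEigenpair (by norm_num) (cyclicCubical n) lam x) : ‖lam‖ ≤ 1 := by
  rw [isEigenpair_cyclicCubical_iff] at h
  rcases eq_or_ne lam 0 with rfl | hlam
  · simp
  · exact (Complex.norm_eq_one_of_pow_eq_one (pow_eq_one_of_cyclic_eigen h.2 hlam h.1)
      (NeZero.ne n)).le

open Fin.NatCast in
lemma isEigenpair_cyclicCubical_of_pow_eq_one {ζ : ℂ} (hζ : ζ ^ n = 1) :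
    IsEigenpair (by norm_num) (cyclicCubical n) (ζ ^ 3) fun k : Fin n => ζ ^ ((k : ℕ) + 1) := by
  have hζ0 : ζ ≠ 0 := fun h => by simp [h, NeZero.ne n] at hζ
  refine (isEigenpair_cyclicCubical_iff _ _).2 ⟨fun h => by simpa [hζ0] using congrFun h 0,
    fun k => ?_⟩
  have hshift (m : ℕ) : ζ ^ ((k + m : Fin n) : ℕ) = ζ ^ ((k : ℕ) + m) := by
    rw [← pow_val_natCast_of_pow_eq_one hζ ((k : ℕ) + m), Nat.cast_add, Fin.cast_val_eq_self]
  have h1 := hshift 1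
  have h2 := hshift 2
  rw [Nat.cast_one] at h1
  rw [Nat.cast_ofNat] at h2
  rw [pow_succ _ ((k + 1 : Fin n) : ℕ), pow_succ _ ((k + 2 : Fin n) : ℕ), h1, h2]
  ring

end CyclicCubical

lemma cyclicCubical_six (A : (Fin 3 → Fin 6) → ℂ)
    (hA : ∀ i : Fin 3 → Fin 6, A i =
      if (i 0, i 1, i 2) ∈
        ({(0,1,2), (1,2,3), (2,3,4), (3,4,5), (4,5,0), (5,0,1)} :
          Finset (Fin 6 × Fin 6 × Fin 6))
      then 1 else 0) :
    A = cyclicCubical 6 := by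
  have hmem : ∀ a b c : Fin 6, (a, b, c) ∈
      ({(0,1,2), (1,2,3), (2,3,4), (3,4,5), (4,5,0), (5,0,1)} :
        Finset (Fin 6 × Fin 6 × Fin 6)) ↔ b = a + 1 ∧ c = a + 2 := by
    decide
  funext i
  simp only [hA, hmem, cyclicCubical]

/-- The cubical `3`-matrix of order `6` with
`a_{1,2,3} = a_{2,3,4} = a_{3,4,5} = a_{4,5,6} = a_{5,6,1} = a_{6,1,2} = 1` (indices
written `0,…,5` here) and all other entries zero has spectral radius `1`, and `-1` is an
eigenvalue with eigenvector `(e^{2πi/6}, e^{4πi/6}, …, e^{12πi/6})`.  So the conclusion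
"`-ρ(A)` an eigenvalue forces `r` even" fails for non-symmetric matrices. -/
theorem nonsymmetric_counterexample
    (A : (Fin 3 → Fin 6) → ℂ)
    (hA : ∀ i : Fin 3 → Fin 6, A i =
      if (i 0, i 1, i 2) ∈
        ({(0,1,2), (1,2,3), (2,3,4), (3,4,5), (4,5,0), (5,0,1)} :
          Finset (Fin 6 × Fin 6 × Fin 6))
      then 1 else 0) :
    IsGreatest {t : ℝ | ∃ (lam : ℂ) (x : Fin 6 → ℂ),
        IsEigenpair (by norm_num) A lam x ∧ ‖lam‖ = t} 1 ∧
      IsEigenpair (by norm_num) A (-1)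
        (fun k : Fin 6 =>
          Complex.exp (2 * Real.pi * Complex.I * ((k : ℕ) + 1) / 6)) := by
  obtain rfl := cyclicCubical_six A hA
  set ζ := Complex.exp (2 * Real.pi * Complex.I / 6)
  have hζ : ζ ^ 6 = 1 := by
    simpa using (Complex.isPrimitiveRoot_exp 6 (by norm_num)).pow_eq_one
  have hζ3 : ζ ^ 3 = -1 := by
    rw [← Complex.exp_nat_mul, ← Complex.exp_pi_mul_I]
    ring_nf
  have hx : (fun k : Fin 6 => Complex.exp (2 * Real.pi * Complex.I * ((k : ℕ) + 1) / 6)) =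
      fun k : Fin 6 => ζ ^ ((k : ℕ) + 1) := by
    funext k
    rw [← Complex.exp_nat_mul]
    push_cast
    ring_nf
  have hpair := isEigenpair_cyclicCubical_of_pow_eq_one hζ
  rw [hζ3, ← hx] at hpair
  exact ⟨⟨⟨-1, _, hpair, by simp⟩, fun _ ⟨_, _, h, ht⟩ =>
    ht ▸ norm_le_one_of_isEigenpair_cyclicCubical h⟩, hpair⟩
end
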